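/- arXiv:2408.16630 — 5 statements merged into one kernel-verified Lean document; each statement's English description precedes it below -/
import Mathlib

section
/- Let R be a ℤ^m-graded commutative ring, A : ℤ^m → ℤ^m an injective group homomorphism, and let R^(A) denote the graded subring ⊕_{d ∈ ℤ^m} R_{A(d)} (graded by d ↦ R_{A(d)}). If f ∈ R is relevant in R (i.e. f is homogeneous and the degrees of homogeneous divisors of powers of f generate a finite-index subgroup of ℤ^m), then some power f^N of f lies in R^(A) and is relevant in R^(A). -/
open scoped BigOperators

variable {m : ℕ} {R : Type*} [CommRing R]

/-- An element is homogeneous w.r.t. a `ℤ^m`-grading `𝒜`. -/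
def IsHomog (𝒜 : (Fin m → ℤ) → AddSubgroup R) (f : R) : Prop :=
  ∃ d, f ∈ 𝒜 d

/-- `f` is relevant: it is homogeneous and the degrees of homogeneous elements dividing
some power of `f` generate a finite-index subgroup of `ℤ^m`. -/
def IsRelevant (𝒜 : (Fin m → ℤ) → AddSubgroup R) (f : R) : Prop :=
  IsHomog 𝒜 f ∧
    (AddSubgroup.closure
      {d : Fin m → ℤ | ∃ g : R, g ∈ 𝒜 d ∧ ∃ k : ℕ, g ∣ f ^ k}).index ≠ 0

/-- The underlying set of the Veronese-type subring `R^(A) = ⊕_d R_{A d}`. -/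
def veroneseSet (𝒜 : (Fin m → ℤ) → AddSubgroup R) (A : (Fin m → ℤ) →+ (Fin m → ℤ)) :
    Set R :=
  (AddSubgroup.closure (⋃ d : Fin m → ℤ, (𝒜 (A d) : Set R)) : AddSubgroup R)

/-- `f` is relevant inside the subring `R^(A)`, graded by `d ↦ R_{A d}`:
it is homogeneous for this grading, and the degrees of homogeneous elements of `R^(A)`
dividing a power of `f` inside `R^(A)` generate a finite-index subgroup of `ℤ^m`. -/
def IsRelevantVeronese (𝒜 : (Fin m → ℤ) → AddSubgroup R)
    (A : (Fin m → ℤ) →+ (Fin m → ℤ)) (f : R) : Prop :=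
  (∃ d, f ∈ 𝒜 (A d)) ∧
    (AddSubgroup.closure
      {d : Fin m → ℤ | ∃ g : R, g ∈ 𝒜 (A d) ∧
        ∃ k : ℕ, ∃ h ∈ veroneseSet 𝒜 A, g * h = f ^ k}).index ≠ 0

/-- Powers of homogeneous elements are homogeneous. -/
lemma pow_mem_nsmul_aux (𝒜 : (Fin m → ℤ) → AddSubgroup R)
    (hmul : ∀ (d e : Fin m → ℤ), ∀ x ∈ 𝒜 d, ∀ y ∈ 𝒜 e, x * y ∈ 𝒜 (d + e))
    (hone : (1 : R) ∈ 𝒜 0) {d : Fin m → ℤ} {g : R} (hg : g ∈ 𝒜 d) (n : ℕ) :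
    g ^ n ∈ 𝒜 (n • d) := by
  induction n with
  | zero => simpa using hone
  | succ n ih =>
      have h := hmul _ _ _ ih _ hg
      rw [pow_succ, succ_nsmul]
      exact h

/-- Some multiple `|det A| • x` of any vector lies in the range of an injective `A`. -/
lemma exists_det_smul_mem_range_aux (A : (Fin m → ℤ) →+ (Fin m → ℤ))
    (hA : Function.Injective A) :
    ∃ N : ℕ, 0 < N ∧ ∀ x : Fin m → ℤ, ∃ w, A w = N • x := by
  classical
  set M : Matrix (Fin m) (Fin m) ℤ := LinearMap.toMatrix' A.toIntLinearMap with hM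
  have hMv : ∀ v, M.mulVec v = A v := by
    intro v
    rw [← Matrix.toLin'_apply, hM, Matrix.toLin'_toMatrix']
    rfl
  have hdet : M.det ≠ 0 := by
    intro h0
    obtain ⟨v, hv, hv0⟩ := Matrix.exists_mulVec_eq_zero_iff.2 h0
    exact hv (hA (by rw [← hMv, hv0, map_zero]))
  refine ⟨M.det.natAbs, Int.natAbs_pos.2 hdet, fun x => ?_⟩
  have key : ∀ x : Fin m → ℤ, A ((Matrix.adjugate M).mulVec x) = M.det • x := by
    intro x
    rw [← hMv, Matrix.mulVec_mulVec, Matrix.mul_adjugate, Matrix.smul_mulVec,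
      Matrix.one_mulVec]
  rcases Int.natAbs_eq M.det with h | h
  · refine ⟨(Matrix.adjugate M).mulVec x, ?_⟩
    have hk := key x
    rw [h, natCast_zsmul] at hk
    exact hk
  · refine ⟨-((Matrix.adjugate M).mulVec x), ?_⟩
    have hk := key x
    rw [h] at hk
    rw [map_neg, hk, neg_smul, neg_neg, natCast_zsmul]

/-- if `R` is a `ℤ^m`-graded ring, `A : ℤ^m → ℤ^m` an injective group
homomorphism and `f ∈ R` is relevant, then some power `f^N` lies in the graded subring
`R^(A) = ⊕_d R_{A d}` and is relevant there. -/
theorem pow_relevant_in_veronese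
    (𝒜 : (Fin m → ℤ) → AddSubgroup R)
    (hgrading : DirectSum.IsInternal fun d : Fin m → ℤ => 𝒜 d)
    (hmul : ∀ (d e : Fin m → ℤ), ∀ x ∈ 𝒜 d, ∀ y ∈ 𝒜 e, x * y ∈ 𝒜 (d + e))
    (hone : (1 : R) ∈ 𝒜 0)
    (A : (Fin m → ℤ) →+ (Fin m → ℤ)) (hA : Function.Injective A)
    (f : R) (hf : IsRelevant 𝒜 f) :
    ∃ N : ℕ, 0 < N ∧ f ^ N ∈ veroneseSet 𝒜 A ∧
      IsRelevantVeronese 𝒜 A (f ^ N) := by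
  classical
  obtain ⟨⟨df, hdf⟩, hidx⟩ := hf
  obtain ⟨N0, hN0, hrange⟩ := exists_det_smul_mem_range_aux A hA
  -- set up the graded-ring structure
  haveI : SetLike.GradedMonoid 𝒜 :=
    { one_mem := hone
      mul_mem := fun {i j} {gi gj} hi hj => hmul _ _ _ hi _ hj }
  haveI : GradedRing 𝒜 := { hgrading.chooseDecomposition with }
  -- homogeneous cofactors
  have hcof : ∀ (dg : Fin m → ℤ) (g : R), g ∈ 𝒜 dg → ∀ k : ℕ, g ∣ f ^ k →
      ∃ h : R, h ∈ 𝒜 ((k • df : Fin m → ℤ) - dg) ∧ g * h = f ^ k := by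
    intro dg g hg k hdvd
    obtain ⟨h, hh⟩ := hdvd
    refine ⟨(DirectSum.decompose 𝒜 h ((k • df : Fin m → ℤ) - dg) : R),
      SetLike.coe_mem _, ?_⟩
    have e1 : (DirectSum.decompose 𝒜 (g * h) (dg + ((k • df : Fin m → ℤ) - dg)) : R)
        = g * (DirectSum.decompose 𝒜 h ((k • df : Fin m → ℤ) - dg) : R) :=
      DirectSum.coe_decompose_mul_add_of_left_mem 𝒜 hg
    rw [← e1, ← hh, add_sub_cancel]
    exact DirectSum.decompose_of_mem_same 𝒜
      (hh ▸ pow_mem_nsmul_aux 𝒜 hmul hone hdf k)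
  -- the original set of degrees and its closure
  set S : Set (Fin m → ℤ) := {d | ∃ g : R, g ∈ 𝒜 d ∧ ∃ k : ℕ, g ∣ f ^ k} with hS
  set H : AddSubgroup (Fin m → ℤ) := AddSubgroup.closure S with hH
  -- the Veronese set of degrees for f ^ N0 and its closure
  set S' : Set (Fin m → ℤ) := {d | ∃ g : R, g ∈ 𝒜 (A d) ∧
      ∃ k : ℕ, ∃ h ∈ veroneseSet 𝒜 A, g * h = (f ^ N0) ^ k} with hS'
  set H' : AddSubgroup (Fin m → ℤ) := AddSubgroup.closure S' with hH'
  -- membership of homogeneous elements of degree `A d` in the veronese set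
  have hmemV : ∀ (d : Fin m → ℤ) (x : R), x ∈ 𝒜 (A d) → x ∈ veroneseSet 𝒜 A := by
    intro d x hx
    exact AddSubgroup.subset_closure (Set.mem_iUnion.2 ⟨d, hx⟩)
  -- key: every degree in S gives (after scaling by N0 and pulling back along A) one in S'
  have hkey : ∀ d ∈ S, ∃ d' ∈ S', A d' = N0 • d := by
    intro d hd
    obtain ⟨g, hg, k, hdvd⟩ := hd
    obtain ⟨h, hhmem, hgh⟩ := hcof d g hg k hdvd
    obtain ⟨d', hd'⟩ := hrange d
    obtain ⟨e', he'⟩ := hrange ((k • df : Fin m → ℤ) - d)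
    have hgpow : g ^ N0 ∈ 𝒜 (A d') := by
      rw [hd']; exact pow_mem_nsmul_aux 𝒜 hmul hone hg N0
    have hhpow : h ^ N0 ∈ 𝒜 (A e') := by
      rw [he']; exact pow_mem_nsmul_aux 𝒜 hmul hone hhmem N0
    refine ⟨d', ⟨g ^ N0, hgpow, k, h ^ N0, hmemV e' _ hhpow, ?_⟩, hd'⟩
    rw [← mul_pow, hgh, ← pow_mul, ← pow_mul, Nat.mul_comm]
  -- the auxiliary subgroup W
  set μ : (Fin m → ℤ) →+ (Fin m → ℤ) :=
    AddMonoidHom.mk' (fun x => N0 • x) (fun a b => smul_add N0 a b) with hμ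
  set W : AddSubgroup (Fin m → ℤ) := AddSubgroup.comap μ (AddSubgroup.map A H') with hW
  have hHW : H ≤ W := by
    rw [hH]
    refine (AddSubgroup.closure_le W).2 ?_
    intro d hd
    obtain ⟨d', hd'S', hd'⟩ := hkey d hd
    refine AddSubgroup.mem_comap.2 (AddSubgroup.mem_map.2
      ⟨d', AddSubgroup.subset_closure hd'S', ?_⟩)
    show A d' = N0 • d
    exact hd'
  -- the modulus
  set q : ℕ := N0 * H.index with hq
  have hqne : q ≠ 0 := Nat.mul_ne_zero hN0.ne' hidx
  haveI : NeZero q := ⟨hqne⟩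
  -- reduction-mod-q homomorphism
  set ψ : (Fin m → ℤ) →+ (Fin m → ZMod q) :=
    AddMonoidHom.mk' (fun x i => ((x i : ℤ) : ZMod q))
      (fun a b => by funext i; simp [Pi.add_apply, Int.cast_add]) with hψ
  set K : AddSubgroup (Fin m → ℤ) := (ψ.comp A).ker with hK
  have hKH' : K ≤ H' := by
    intro d' hd'
    have hdvd : ∀ i, (q : ℤ) ∣ A d' i := by
      intro i
      have : ((A d' i : ℤ) : ZMod q) = 0 := congrFun (AddMonoidHom.mem_ker.1 hd') i
      exact (ZMod.intCast_zmod_eq_zero_iff_dvd _ _).1 this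
    set y : Fin m → ℤ := fun i => A d' i / (q : ℤ) with hy
    have hAy : A d' = N0 • (H.index • y) := by
      funext i
      have : (q : ℤ) * y i = A d' i := Int.mul_ediv_cancel' (hdvd i)
      simp only [Pi.smul_apply, smul_eq_mul, ← this, hq]
      push_cast
      ring
    have hyH : H.index • y ∈ H := AddSubgroup.nsmul_index_mem H y
    have hyW : H.index • y ∈ W := hHW hyH
    obtain ⟨h', hh'H', hh'⟩ := AddSubgroup.mem_map.1 (AddSubgroup.mem_comap.1 hyW)
    have hAh' : A h' = N0 • (H.index • y) := hh'
    have : h' = d' := hA (by rw [hAh', ← hAy])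
    exact this ▸ hh'H'
  -- finiteness of the quotient by K
  have hKidx : K.index ≠ 0 := by
    have : Finite ((Fin m → ℤ) ⧸ K) := by
      have e := QuotientAddGroup.quotientKerEquivRange (ψ.comp A)
      exact Finite.of_equiv _ e.symm.toEquiv
    exact AddSubgroup.index_ne_zero_of_finite
  have hH'idx : H'.index ≠ 0 := by
    intro h0
    exact hKidx (Nat.eq_zero_of_zero_dvd (h0 ▸ AddSubgroup.index_dvd_of_le hKH'))
  -- conclude
  obtain ⟨df', hdf'⟩ := hrange df
  have hfN : f ^ N0 ∈ 𝒜 (A df') := hdf' ▸ pow_mem_nsmul_aux 𝒜 hmul hone hdf N0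
  exact ⟨N0, hN0, hmemV df' _ hfN, ⟨df', hfN⟩, hH'idx⟩
end

section
/- Let Γ ⊆ ℚ_{≥0}^C be a submonoid contained in the nonnegative orthant of ℚ^C for a finite set C, equipped with a monoid homomorphism deg : Γ → ℕ_0^m (degree map). Fix d ∈ ℕ_0^m and generators a^(1), …, a^(s) of Γ. Then the Veronese submonoid Γ^(d) = {a ∈ Γ : deg a ∈ ℕ_0 · d} is finitely generated. (It suffices to show that M = ℕ_0^s ∩ ker φ is finitely generated, where φ : ℤ^s → ℤ^m/ℤd sends (n_1,…,n_s) to Σ n_i deg a^(i) mod ℤd.) -/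
/-!
Write `Γ` as the image of `ℕ^s` under `n ↦ ∑ nᵢ aᵢ` for generators `aᵢ`; then `Γ^(d)` is
the image of `M = {n : ∑ nᵢ deg aᵢ ∈ ℕ d}`. Since `ℕ d` is closed under taking differences
inside `ℕ^m` and `deg aᵢ ∈ ℕ^m`, so is `M` inside `ℕ^s`. Such a submonoid is generated by its
minimal nonzero elements (if `x = z + w` with `z, x ∈ M` then also `w ∈ M`), and by Dickson's
lemma there are only finitely many of them.
-/

namespace AddSubmonoid

variable {M N P : Type*} [AddCommMonoid M] [AddCommMonoid N] [AddCommMonoid P]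

def IsSubtractive (S : AddSubmonoid M) : Prop :=
  ∀ x ∈ S, ∀ y, x + y ∈ S → y ∈ S

theorem isSubtractive_closure_singleton [PartialOrder M] [CanonicallyOrderedAdd M]
    [IsLeftCancelAdd M] (d : M) : (closure {d}).IsSubtractive := by
  intro x hx y hxy
  obtain ⟨k, rfl⟩ := mem_closure_singleton.1 hx
  obtain ⟨l, hl⟩ := mem_closure_singleton.1 hxy
  rcases le_total k l with hkl | hlk
  · obtain ⟨j, rfl⟩ := Nat.exists_eq_add_of_le hkl
    rw [add_nsmul] at hl
    exact mem_closure_singleton.2 ⟨j, add_left_cancel hl⟩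
  · obtain ⟨j, rfl⟩ := Nat.exists_eq_add_of_le hlk
    rw [add_nsmul, add_assoc, left_eq_add, add_eq_zero] at hl
    rw [hl.2]
    exact zero_mem _

theorem IsSubtractive.comap_map {f : M →+ N} {g : P →+ N} (hg : Function.Injective g)
    (hfg : AddMonoidHom.mrange f ≤ AddMonoidHom.mrange g) {S : AddSubmonoid P}
    (hS : S.IsSubtractive) : ((S.map g).comap f).IsSubtractive := by
  rintro x ⟨s, hs, hsx⟩ y ⟨t, ht, hty⟩
  obtain ⟨u, hu⟩ := hfg ⟨y, rfl⟩
  have hsut : s + u = t := hg (by rw [map_add, hsx, hu, hty, map_add])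
  exact ⟨u, hS s hs u (hsut ▸ ht), hu⟩

theorem IsSubtractive.closure_setOf_minimal [PartialOrder M] [CanonicallyOrderedAdd M]
    [IsLeftCancelAdd M] [WellFoundedLT M] {S : AddSubmonoid M} (hS : S.IsSubtractive) :
    closure {x | Minimal (fun y => y ∈ S ∧ y ≠ 0) x} = S := by
  refine le_antisymm (closure_le.2 fun _ hx => (Set.mem_ofPred.1 hx).prop.1) fun x hx => ?_
  induction x using WellFoundedLT.induction with
  | ind x ih =>
    rcases eq_or_ne x 0 with rfl | hx0
    · exact zero_mem _
    by_cases hmin : Minimal (fun y => y ∈ S ∧ y ≠ 0) x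
    · exact subset_closure hmin
    obtain ⟨z, hzx, hzS, hz0⟩ := (not_minimal_iff_exists_lt ⟨hx, hx0⟩).1 hmin
    obtain ⟨w, rfl⟩ := le_iff_exists_add.1 hzx.le
    have hwx : w < z + w :=
      lt_of_le_of_ne le_add_self fun h => hz0 (add_eq_left.1 ((add_comm w z).trans h.symm))
    exact add_mem (ih z hzx hzS) (ih w hwx (hS z hzS w hx))

theorem IsSubtractive.fg [PartialOrder M] [CanonicallyOrderedAdd M] [IsLeftCancelAdd M]
    [WellQuasiOrderedLE M] {S : AddSubmonoid M} (hS : S.IsSubtractive) : S.FG :=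
  (fg_iff S).2 ⟨_, hS.closure_setOf_minimal,
    WellQuasiOrderedLE.finite_of_isAntichain (setOfPred_minimal_antichain _)⟩

theorem FG.exists_mrange_eq {S : AddSubmonoid M} (hS : S.FG) :
    ∃ (s : Finset M) (φ : (s → ℕ) →+ M), AddMonoidHom.mrange φ = S := by
  obtain ⟨s, rfl⟩ := hS
  refine ⟨s, (Fintype.linearCombination ℕ ((↑) : s → M)).toAddMonoidHom, ?_⟩
  ext x
  simp [mem_closure_finset', Fintype.linearCombination_apply, eq_comm]

end AddSubmonoid

theorem veronese_submonoid_fg_general (C : Type*) (m : ℕ)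
    (Γ : AddSubmonoid (C → ℚ)) (hΓfg : Γ.FG)
    (deg : (C → ℚ) →ₗ[ℚ] (Fin m → ℚ))
    (hdegℕ : ∀ a ∈ Γ, ∀ i : Fin m, ∃ k : ℕ, deg a i = k)
    (d : Fin m → ℕ) :
    (Γ ⊓ AddSubmonoid.comap deg.toAddMonoidHom
        (AddSubmonoid.closure {fun i : Fin m => (d i : ℚ)})).FG := by
  obtain ⟨s, φ, rfl⟩ := hΓfg.exists_mrange_eq
  set castHom := (Nat.castAddMonoidHom ℚ).compLeft (Fin m)
  have hcast : Function.Injective castHom := Nat.cast_injective.comp_left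
  have hdeg : AddMonoidHom.mrange (deg.toAddMonoidHom.comp φ) ≤ AddMonoidHom.mrange castHom := by
    rintro _ ⟨n, rfl⟩
    choose k hk using hdegℕ (φ n) ⟨n, rfl⟩
    exact ⟨k, funext fun i => (hk i).symm⟩
  have hd : AddSubmonoid.closure {fun i : Fin m => (d i : ℚ)} =
      (AddSubmonoid.closure {d}).map castHom := by
    rw [AddMonoidHom.map_mclosure, Set.image_singleton]
    rfl
  rw [hd, inf_comm, ← AddSubmonoid.map_comap_eq, AddSubmonoid.comap_comap]
  exact ((AddSubmonoid.isSubtractive_closure_singleton d).comap_map hcast hdeg).fg.map φ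

/-- Let `Γ` be a finitely generated submonoid of the nonnegative orthant
`ℚ_{≥0}^C` (`C` a finite set), `deg : ℚ^C → ℚ^m` a linear map mapping `Γ` into `ℕ_0^m`,
and `d ∈ ℕ_0^m`.  Then the Veronese submonoid
`Γ^(d) = {a ∈ Γ : deg a ∈ ℕ_0 · d}` is finitely generated. -/
theorem veronese_submonoid_fg (C : Type*) [Fintype C] (m : ℕ)
    (Γ : AddSubmonoid (C → ℚ)) (hΓfg : Γ.FG)
    (hΓpos : ∀ a ∈ Γ, ∀ c : C, 0 ≤ a c)
    (deg : (C → ℚ) →ₗ[ℚ] (Fin m → ℚ))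
    (hdegℕ : ∀ a ∈ Γ, ∀ i : Fin m, ∃ k : ℕ, deg a i = k)
    (d : Fin m → ℕ) :
    (Γ ⊓ AddSubmonoid.comap deg.toAddMonoidHom
        (AddSubmonoid.closure {fun i : Fin m => (d i : ℚ)})).FG :=
  veronese_submonoid_fg_general C m Γ hΓfg deg hdegℕ d
end

section
/- For a finite chain C = {p_0 < p_1 < … < p_s} with positive integer bonds b_1, …, b_s assigned to the covering relations, define the LS-lattice LS_C = { Σ_{i=0}^s a_i e_{p_i} ∈ ℚ^C : b_i(a_i + a_{i+1} + … + a_s) ∈ ℤ for all i = 1,…,s, and a_0 + … + a_s ∈ ℤ }. Then LS_C is generated as a group by its intersection LS_C^+ = LS_C ∩ ℚ_{≥0}^C with the nonnegative orthant. -/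
open scoped BigOperators

/-- Membership in the LS-lattice of a chain `p_0 < … < p_s` with bonds
`b 0, …, b (s-1)` (where `b k` is the bond of the covering `p_{k+1} > p_k`):
`a ∈ LS_C` iff `b_i (a_i + … + a_s) ∈ ℤ` for all `i = 1, …, s`
and `a_0 + … + a_s ∈ ℤ`. -/
def memLS (s : ℕ) (b : Fin s → ℕ) (a : Fin (s + 1) → ℚ) : Prop :=
  (∀ k : Fin s, ∃ z : ℤ,
      (b k : ℚ) * (∑ j : Fin (s + 1), if (k : ℕ) + 1 ≤ (j : ℕ) then a j else 0) = z) ∧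
    ∃ z : ℤ, (∑ j : Fin (s + 1), a j) = z

lemma memLS_add {s : ℕ} {b : Fin s → ℕ} {a a' : Fin (s + 1) → ℚ}
    (h : memLS s b a) (h' : memLS s b a') : memLS s b (a + a') := by
  obtain ⟨h1, z2, h2⟩ := h
  obtain ⟨h1', z2', h2'⟩ := h'
  constructor
  · intro k
    obtain ⟨z, hz⟩ := h1 k
    obtain ⟨z', hz'⟩ := h1' k
    refine ⟨z + z', ?_⟩
    have : (∑ j : Fin (s + 1), if (k : ℕ) + 1 ≤ (j : ℕ) then (a + a') j else 0)
        = (∑ j : Fin (s + 1), if (k : ℕ) + 1 ≤ (j : ℕ) then a j else 0)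
        + (∑ j : Fin (s + 1), if (k : ℕ) + 1 ≤ (j : ℕ) then a' j else 0) := by
      rw [← Finset.sum_add_distrib]
      refine Finset.sum_congr rfl fun j _ => ?_
      by_cases hkj : (k : ℕ) + 1 ≤ (j : ℕ) <;> simp [hkj]
    rw [this, mul_add, hz, hz']
    push_cast; ring
  · refine ⟨z2 + z2', ?_⟩
    have : (∑ j : Fin (s + 1), (a + a') j)
        = (∑ j : Fin (s + 1), a j) + (∑ j : Fin (s + 1), a' j) := by
      rw [← Finset.sum_add_distrib]; rfl
    rw [this, h2, h2']; push_cast; ring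

lemma memLS_int {s : ℕ} {b : Fin s → ℕ} (n : Fin (s + 1) → ℤ) :
    memLS s b (fun j => (n j : ℚ)) := by
  constructor
  · intro k
    refine ⟨(b k : ℤ) * (∑ j : Fin (s + 1), if (k : ℕ) + 1 ≤ (j : ℕ) then n j else 0), ?_⟩
    push_cast
    rfl
  · exact ⟨∑ j : Fin (s + 1), n j, by push_cast; rfl⟩

/-- the LS-lattice `LS_C` is generated as a group by its
intersection `LS_C^+` with the nonnegative orthant. -/
theorem LS_lattice_generated_by_LS_monoid (s : ℕ) (b : Fin s → ℕ)
    (hb : ∀ k, 0 < b k) :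
    AddSubgroup.closure ({a | memLS s b a ∧ ∀ j, 0 ≤ a j} : Set (Fin (s + 1) → ℚ)) =
      AddSubgroup.closure ({a | memLS s b a} : Set (Fin (s + 1) → ℚ)) := by
  apply le_antisymm
  · exact AddSubgroup.closure_mono fun a ha => ha.1
  · rw [AddSubgroup.closure_le]
    intro a ha
    set N : Fin (s + 1) → ℚ := fun j => ((⌈-(a j)⌉₊ : ℤ) : ℚ) with hN
    have hNmem : memLS s b N := memLS_int _
    have hNnonneg : ∀ j, 0 ≤ N j := fun j => by positivity
    have haN : memLS s b (a + N) := memLS_add ha hNmem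
    have haNnonneg : ∀ j, 0 ≤ (a + N) j := by
      intro j
      have := Nat.le_ceil (-(a j))
      simp only [Pi.add_apply, hN]
      push_cast at this ⊢
      linarith
    have h1 : (a + N) ∈ AddSubgroup.closure
        ({x | memLS s b x ∧ ∀ j, 0 ≤ x j} : Set (Fin (s + 1) → ℚ)) :=
      AddSubgroup.subset_closure ⟨haN, haNnonneg⟩
    have h2 : N ∈ AddSubgroup.closure
        ({x | memLS s b x ∧ ∀ j, 0 ≤ x j} : Set (Fin (s + 1) → ℚ)) :=
      AddSubgroup.subset_closure ⟨hNmem, hNnonneg⟩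
    have : a = (a + N) - N := by ring
    rw [this]
    exact sub_mem h1 h2
end

section
/- Let C = {p_0 < … < p_s} be a finite chain with positive integer bonds b_1,…,b_s, and suppose b_j = 1 for some fixed j. Then the LS-lattice LS_C decomposes as a direct product: LS_C = LS_{C'} × LS_{C''} inside ℚ^C = ℚ^{C'} × ℚ^{C''}, where C' = {p_0 < … < p_{j-1}} with bonds b_1,…,b_{j-1} and C'' = {p_j < … < p_s} with bonds b_{j+1},…,b_s. -/
open scoped BigOperators

private lemma sum_if_Ico (N m : ℕ) (A : ℕ → ℚ) :
    (∑ j ∈ Finset.range N, if m ≤ j then A j else 0) = ∑ j ∈ Finset.Ico m N, A j := by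
  rw [← Finset.sum_filter]
  congr 1
  ext j
  simp only [Finset.mem_filter, Finset.mem_range, Finset.mem_Ico]
  omega

private def Afun (N : ℕ) (a : Fin N → ℚ) : ℕ → ℚ := fun j => if h : j < N then a ⟨j, h⟩ else 0

private def Tfun (N : ℕ) (a : Fin N → ℚ) (m : ℕ) : ℚ := ∑ j ∈ Finset.Ico m N, Afun N a j

/-- if a bond of a chain equals `1`, the LS-lattice decomposes as the
direct product of the LS-lattices of the two pieces.  Here the chain has `n' + n'' + 2`
elements `p_0 < … < p_{n'} < p_{n'+1} < … < p_{n'+n''+1}` with bonds `b`, the bond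
`b n'` of the covering `p_{n'+1} > p_{n'}` equals `1`, `C' = {p_0, …, p_{n'}}`,
`C'' = {p_{n'+1}, …, p_{n'+n''+1}}`. -/
theorem LS_lattice_product_of_bond_one (n' n'' : ℕ)
    (b : Fin (n' + 1 + n'') → ℕ) (hb : ∀ k, 0 < b k)
    (hbond : b ⟨n', by omega⟩ = 1)
    (a : Fin (n' + 1 + n'' + 1) → ℚ) :
    memLS (n' + 1 + n'') b a ↔
      (memLS n' (fun k => b ⟨k, by omega⟩) (fun k : Fin (n' + 1) => a ⟨k, by omega⟩) ∧
       memLS n'' (fun k => b ⟨n' + 1 + k, by omega⟩)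
         (fun k : Fin (n'' + 1) => a ⟨n' + 1 + k, by omega⟩)) := by
  have hN : n' + 1 ≤ n' + 1 + n'' + 1 := by omega
  set A : ℕ → ℚ := Afun (n' + 1 + n'' + 1) a with hAdef
  set T : ℕ → ℚ := Tfun (n' + 1 + n'' + 1) a with hTdef
  have hAa : ∀ (j : ℕ) (h : j < n' + 1 + n'' + 1), A j = a ⟨j, h⟩ := by
    intro j h; simp [hAdef, Afun, h]
  have hbig : ∀ m : ℕ, (∑ j : Fin (n' + 1 + n'' + 1), if m ≤ (j : ℕ) then a j else 0) = T m := by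
    intro m
    have e1 : (∑ j : Fin (n' + 1 + n'' + 1), if m ≤ (j : ℕ) then a j else 0)
        = ∑ j ∈ Finset.range (n' + 1 + n'' + 1), if m ≤ j then A j else 0 := by
      rw [← Fin.sum_univ_eq_sum_range (fun j => if m ≤ j then A j else 0)]
      refine Finset.sum_congr rfl fun j _ => ?_
      by_cases h : m ≤ (j : ℕ)
      · simp only [h, if_true, hAa (j : ℕ) j.isLt]
      · simp [h]
    rw [e1, sum_if_Ico]
    rfl
  have hsplit : ∀ m : ℕ, m ≤ n' + 1 →
      T m = (∑ j ∈ Finset.Ico m (n' + 1), A j) + T (n' + 1) := by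
    intro m hm
    show (∑ j ∈ Finset.Ico m (n' + 1 + n'' + 1), A j) = _
    exact (Finset.sum_Ico_consecutive _ hm (by omega)).symm
  have hC' : ∀ m : ℕ, m ≤ n' + 1 →
      (∑ j : Fin (n' + 1), if m ≤ (j : ℕ) then a ⟨(j : ℕ), by omega⟩ else 0)
        = T m - T (n' + 1) := by
    intro m hm
    have e1 : (∑ j : Fin (n' + 1), if m ≤ (j : ℕ) then a ⟨(j : ℕ), by omega⟩ else 0)
        = ∑ j ∈ Finset.Ico m (n' + 1), A j := by
      rw [← sum_if_Ico,
        ← Fin.sum_univ_eq_sum_range (fun j => if m ≤ j then A j else 0) (n' + 1)]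
      refine Finset.sum_congr rfl fun j _ => ?_
      by_cases h : m ≤ (j : ℕ)
      · simp only [h, if_true, hAa (j : ℕ) (by omega)]
      · simp [h]
    rw [e1, hsplit m hm]; ring
  have hC'' : ∀ m : ℕ, m ≤ n'' + 1 →
      (∑ j : Fin (n'' + 1), if m ≤ (j : ℕ) then a ⟨n' + 1 + (j : ℕ), by omega⟩ else 0)
        = T (n' + 1 + m) := by
    intro m hm
    have e1 : (∑ j : Fin (n'' + 1), if m ≤ (j : ℕ) then a ⟨n' + 1 + (j : ℕ), by omega⟩ else 0)
        = ∑ j ∈ Finset.Ico m (n'' + 1), A (n' + 1 + j) := by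
      rw [← sum_if_Ico (n'' + 1) m (fun j => A (n' + 1 + j)),
        ← Fin.sum_univ_eq_sum_range (fun j => if m ≤ j then A (n' + 1 + j) else 0) (n'' + 1)]
      refine Finset.sum_congr rfl fun j _ => ?_
      by_cases h : m ≤ (j : ℕ)
      · simp only [h, if_true, hAa (n' + 1 + (j : ℕ)) (by omega)]
      · simp [h]
    rw [e1]
    show _ = ∑ j ∈ Finset.Ico (n' + 1 + m) (n' + 1 + n'' + 1), A j
    rw [Finset.sum_Ico_eq_sum_range, Finset.sum_Ico_eq_sum_range]
    rw [show n'' + 1 - m = n' + 1 + n'' + 1 - (n' + 1 + m) from by omega]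
    refine Finset.sum_congr rfl fun i _ => ?_
    congr 1
    omega
  constructor
  · rintro ⟨H1, H2⟩
    have hT1 : ∃ zT : ℤ, T (n' + 1) = zT := by
      obtain ⟨z, hz⟩ := H1 ⟨n', by omega⟩
      rw [hbig] at hz
      simp only [hbond] at hz
      exact ⟨z, by push_cast at hz ⊢; linarith⟩
    obtain ⟨zT, hzT⟩ := hT1
    refine ⟨⟨fun k => ?_, ?_⟩, fun k => ?_, ⟨zT, ?_⟩⟩
    · obtain ⟨z, hz⟩ := H1 ⟨(k : ℕ), by omega⟩
      rw [hbig] at hz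
      refine ⟨z - (b ⟨(k : ℕ), by omega⟩ : ℤ) * zT, ?_⟩
      rw [hC' ((k : ℕ) + 1) (by omega)]
      push_cast
      linear_combination hz - (b ⟨(k : ℕ), by omega⟩ : ℚ) * hzT
    · obtain ⟨z, hz⟩ := H2
      have h0 := hC' 0 (by omega)
      simp only [Nat.zero_le, if_true] at h0
      have hbig0 := hbig 0
      simp only [Nat.zero_le, if_true] at hbig0
      refine ⟨z - zT, ?_⟩
      rw [h0, hbig0.symm.trans hz, hzT]
      push_cast; ring
    · obtain ⟨z, hz⟩ := H1 ⟨n' + 1 + (k : ℕ), by omega⟩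
      rw [hbig] at hz
      refine ⟨z, ?_⟩
      rw [hC'' ((k : ℕ) + 1) (by omega),
        show n' + 1 + ((k : ℕ) + 1) = n' + 1 + (k : ℕ) + 1 from by omega]
      exact hz
    · have h0 := hC'' 0 (by omega)
      simp only [Nat.zero_le, if_true, Nat.add_zero] at h0
      exact h0.trans hzT
  · rintro ⟨⟨H1', H2'⟩, H1'', H2''⟩
    obtain ⟨zT, hzT⟩ : ∃ zT : ℤ, T (n' + 1) = zT := by
      obtain ⟨z, hz⟩ := H2''
      have h0 := hC'' 0 (by omega)
      simp only [Nat.zero_le, if_true, Nat.add_zero] at h0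
      exact ⟨z, h0.symm.trans hz⟩
    constructor
    · intro k
      rcases lt_trichotomy (k : ℕ) n' with hk | hk | hk
      · obtain ⟨z, hz⟩ := H1' ⟨(k : ℕ), hk⟩
        rw [hC' ((k : ℕ) + 1) (by omega)] at hz
        beta_reduce at hz
        refine ⟨z + (b k : ℤ) * zT, ?_⟩
        rw [hbig]
        have hbk : b ⟨(k : ℕ), by omega⟩ = b k := by congr 1
        rw [hbk] at hz
        push_cast
        linear_combination hz + (b k : ℚ) * hzT
      · refine ⟨zT, ?_⟩
        rw [hbig]
        have hkk : k = ⟨n', by omega⟩ := Fin.ext hk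
        rw [hkk, hbond]
        simp only [Nat.cast_one, one_mul]
        exact hzT
      · obtain ⟨z, hz⟩ := H1'' ⟨(k : ℕ) - (n' + 1), by omega⟩
        rw [hC'' (((k : ℕ) - (n' + 1)) + 1) (by omega)] at hz
        beta_reduce at hz
        refine ⟨z, ?_⟩
        rw [hbig]
        have hbk : b ⟨n' + 1 + ((k : ℕ) - (n' + 1)), by omega⟩ = b k := by
          congr 1
          exact Fin.ext (by simpa using by omega)
        rw [hbk] at hz
        rw [show n' + 1 + ((k : ℕ) - (n' + 1) + 1) = (k : ℕ) + 1 from by omega] at hz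
        exact hz
    · obtain ⟨z, hz⟩ := H2'
      have h0 := hC' 0 (by omega)
      simp only [Nat.zero_le, if_true] at h0
      have hbig0 := hbig 0
      simp only [Nat.zero_le, if_true] at hbig0
      refine ⟨z + zT, ?_⟩
      rw [hbig0]
      have : T 0 = (z : ℚ) + (zT : ℚ) := by
        have := h0.symm.trans hz
        linarith [hzT]
      rw [this]; push_cast; ring
end

section
/- Let D ⊆ C ⊆ A be finite chains of covering relations in a finite poset A with positive integer bonds on covering relations, where D is a subchain of C consisting of covering relations of A. Then LS_C ∩ ℚ^D = LS_D, where ℚ^D is embedded in ℚ^C as the vectors supported on D. -/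
/-!
Membership in an LS-lattice says that the total sum is an integer and that each bond times
the corresponding tail sum is an integer. For a vector supported on `D = [t, t + u]`, every
tail sum starting at or below `t` is the total and every tail sum starting beyond `t + u`
vanishes, so the conditions of `C` at bonds outside `D` are automatic, and the remaining
ones are exactly those of `D`.
-/

open scoped BigOperators

open Finset

def tailSum {n : ℕ} (a : Fin n → ℚ) (m : ℕ) : ℚ :=
  ∑ j : Fin n, if m ≤ (j : ℕ) then a j else 0

lemma memLS_iff_tailSum {s : ℕ} (b : Fin s → ℕ) (a : Fin (s + 1) → ℚ) :
    memLS s b a ↔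
      (∀ k : Fin s, ∃ z : ℤ, b k * tailSum a (k + 1) = z) ∧ ∃ z : ℤ, tailSum a 0 = z := by
  simp only [memLS, tailSum, zero_le, ite_true]

lemma tailSum_comp_val {n : ℕ} (f : ℕ → ℚ) (m : ℕ) :
    tailSum (fun j : Fin n => f j) m = ∑ i ∈ Ico m n, f i := by
  rw [tailSum, Fin.sum_univ_eq_sum_range (fun i => if m ≤ i then f i else 0), ← sum_filter]
  congr 1
  ext i
  simp only [mem_filter, mem_range, mem_Ico, and_comm]

lemma sum_Ico_eq_sum_Ico_max_of_support {M : Type*} [AddCommMonoid M] {F : ℕ → M}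
    {t u n : ℕ} (hn : t + u < n) (hF : ∀ i, F i ≠ 0 → t ≤ i ∧ i ≤ t + u) (m : ℕ) :
    ∑ i ∈ Ico m n, F i = ∑ i ∈ Ico (max m t) (t + u + 1), F i := by
  refine (sum_subset (fun i hi => ?_) fun i hi hi' => ?_).symm
  · simp only [mem_Ico] at hi ⊢
    omega
  · by_contra h
    have := hF i h
    simp only [mem_Ico] at hi hi'
    omega

lemma memLS_iff_of_tailSum_eq {s t u : ℕ} (htu : t + u ≤ s) (b : Fin s → ℕ)
    (a : Fin (s + 1) → ℚ) (W : ℕ → ℚ) (hW : ∀ r, t + u < r → W r = 0)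
    (ha : ∀ m, tailSum a m = W (max m t)) :
    memLS s b a ↔
      (∀ k : Fin u, ∃ z : ℤ, b (Fin.castLE htu (Fin.natAdd t k)) * W (t + (k + 1)) = z) ∧
        ∃ z : ℤ, W t = z := by
  simp only [memLS_iff_tailSum, ha, Nat.zero_max]
  refine ⟨fun ⟨hC, hT⟩ => ⟨fun k => ?_, hT⟩, fun ⟨hD, hT⟩ => ⟨fun k => ?_, hT⟩⟩
  · simpa [max_eq_left, add_assoc] using hC (Fin.castLE htu (Fin.natAdd t k))
  obtain ⟨z, hz⟩ := hT
  rcases lt_or_ge (k : ℕ) t with hkt | hkt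
  · exact ⟨b k * z, by rw [max_eq_right hkt, hz]; push_cast; ring⟩
  rcases lt_or_ge (k : ℕ) (t + u) with hku | hku
  · have hk : Fin.castLE htu (Fin.natAdd t ⟨k - t, by omega⟩) = k :=
      Fin.ext (by simp only [Fin.natAdd_mk, Fin.castLE_mk]; omega)
    simpa [hk, max_eq_left (by omega : t ≤ (k : ℕ) + 1), ← add_assoc, Nat.add_sub_cancel' hkt]
      using hD ⟨k - t, by omega⟩
  · exact ⟨0, by rw [max_eq_left (by omega), hW _ (by omega), mul_zero, Int.cast_zero]⟩

/-- `C = {p_0 < … < p_s}` with bonds `b`, and `D = {p_t, …, p_{t+u}}` with bonds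
`b t, …, b (t+u-1)`; a vector of `ℚ^C` supported on `D` is identified with its restriction. -/
theorem LS_lattice_subchain (s t u : ℕ) (htu : t + u ≤ s)
    (b : Fin s → ℕ)
    (a : Fin (s + 1) → ℚ)
    (hsupp : ∀ j : Fin (s + 1), a j ≠ 0 → t ≤ (j : ℕ) ∧ (j : ℕ) ≤ t + u) :
    memLS s b a ↔
      memLS u (fun k => b ⟨t + k, by omega⟩)
        (fun k : Fin (u + 1) => a ⟨t + k, by omega⟩) := by
  set F : ℕ → ℚ := Function.extend Fin.val a 0
  have hFa : ∀ j : Fin (s + 1), a j = F j := fun j =>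
    (Fin.val_injective.extend_apply a (0 : ℕ → ℚ) j).symm
  have hF : ∀ i, F i ≠ 0 → t ≤ i ∧ i ≤ t + u := by
    intro i hi
    by_cases h : ∃ j : Fin (s + 1), j.val = i
    · obtain ⟨j, rfl⟩ := h
      exact hsupp j (by rwa [hFa])
    · exact absurd (Function.extend_apply' a (0 : ℕ → ℚ) i h) hi
  set W : ℕ → ℚ := fun r => ∑ i ∈ Ico r (t + u + 1), F i
  have hW : ∀ r, t + u < r → W r = 0 := fun r hr => by
    simp only [W, Ico_eq_empty_of_le (by omega : t + u + 1 ≤ r), sum_empty]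
  have hC : ∀ m, tailSum a m = W (max m t) := fun m => by
    rw [show a = fun j : Fin (s + 1) => F j from funext hFa, tailSum_comp_val]
    exact sum_Ico_eq_sum_Ico_max_of_support (by omega) hF m
  have hD : ∀ m, tailSum (fun k : Fin (u + 1) => a ⟨t + k, by omega⟩) m = W (t + m) := by
    intro m
    simp only [hFa, tailSum_comp_val (fun i => F (t + i)), sum_Ico_add, W]
    rw [add_comm m t, add_comm (u + 1) t, add_assoc]
  rw [memLS_iff_of_tailSum_eq htu b a W hW hC, memLS_iff_tailSum]
  simp only [hD, add_zero]
  rfl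
end
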